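/- Let n ≥ 3, μ_s(x) = (n−2)x_s + Σ_{j=1}^n x_j, Γ = {x ∈ ℝⁿ : μ_s(x) > 0 for all s}, and F(x) = (∏_{s=1}^n μ_s(x))^{1/n}. Then for every x ∈ Γ one has Σ_{j=1}^n x_j > 0, F is differentiable at x with ∂F/∂x_i (x) = (F(x)/n) · Σ_{s=1}^n (1 + (n−2)δ_{is})/μ_s(x) for each i, and ∂F/∂x_i (x) ≥ (1/n) · F(x)/(Σ_{j=1}^n x_j) for each i; i.e., F satisfies condition (C₅) with ε = 1/n. -/

import Mathlib

/-!
Each `μ_s` is linear and positive on `Γ`, so `F = (∏ μ_s)^(1/n)` has logarithmic gradient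
`∇F / F = (1/n) ∑_s ∇μ_s / μ_s`, and `∂_i μ_s = 1 + (n-2)δ_{is} ≥ 0`. Summing the `μ_s` gives
`∑_s μ_s = (2n-2) σ₁`, which forces `σ₁ > 0`; since the weights `1 + (n-2)δ_{is}` also sum to
`2n-2`, the bound `∑_s w_s/μ_s ≥ (∑_s w_s)/(∑_s μ_s)` yields `∂_i F ≥ F / (n σ₁)`.
-/

open Finset

theorem HasFDerivAt.prod_rpow_const {ι E : Type*} [Fintype ι] [DecidableEq ι]
    [NormedAddCommGroup E] [NormedSpace ℝ E] {f : ι → E → ℝ} {f' : ι → E →L[ℝ] ℝ} {x : E}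
    (p : ℝ) (hf : ∀ s, HasFDerivAt (f s) (f' s) x) (hpos : ∀ s, 0 < f s x) :
    HasFDerivAt (fun y => (∏ s, f s y) ^ p)
      ((p * (∏ s, f s x) ^ p) • ∑ s, (f s x)⁻¹ • f' s) x := by
  have hP : 0 < ∏ s, f s x := prod_pos fun s _ => hpos s
  convert (HasFDerivAt.finsetProd fun s _ => hf s).rpow_const (p := p) (Or.inl hP.ne') using 1
  simp only [smul_sum, smul_smul]
  refine sum_congr rfl fun s _ => ?_
  congr 1
  have hrest : 0 < ∏ t ∈ univ.erase s, f t x := prod_pos fun t _ => hpos t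
  rw [Real.rpow_sub_one hP.ne', ← mul_prod_erase univ (f · x) (mem_univ s)]
  field_simp [hrest.ne']

theorem sum_div_sum_le_sum_div {ι : Type*} (t : Finset ι) {w a : ι → ℝ}
    (hw : ∀ s ∈ t, 0 ≤ w s) (ha : ∀ s ∈ t, 0 < a s) :
    (∑ s ∈ t, w s) / ∑ s ∈ t, a s ≤ ∑ s ∈ t, w s / a s := by
  rw [sum_div]
  exact sum_le_sum fun s hs => div_le_div_of_nonneg_left (hw s hs) (ha s hs)
    (single_le_sum (fun r hr => (ha r hr).le) hs)

section LinearForms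

variable {ι : Type*} [Fintype ι]

theorem sum_mul_apply_add_sum (c : ℝ) (y : ι → ℝ) :
    ∑ s, (c * y s + ∑ j, y j) = (c + Fintype.card ι) * ∑ j, y j := by
  simp only [sum_add_distrib, ← mul_sum, sum_const, card_univ, nsmul_eq_mul]
  ring

theorem hasFDerivAt_mul_apply_add_sum (c : ℝ) (s : ι) (x : ι → ℝ) :
    HasFDerivAt (fun y : ι → ℝ => c * y s + ∑ j, y j)
      (c • ContinuousLinearMap.proj s + ∑ j, ContinuousLinearMap.proj j : (ι → ℝ) →L[ℝ] ℝ) x :=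
  ((hasFDerivAt_apply s x).const_mul c).add (HasFDerivAt.fun_sum fun j _ => hasFDerivAt_apply j x)

theorem sum_pos_of_forall_mul_apply_add_sum_pos [Nonempty ι] {c : ℝ} (hc : 0 ≤ c) {y : ι → ℝ}
    (hy : ∀ s, 0 < c * y s + ∑ j, y j) : 0 < ∑ j, y j := by
  have h := sum_pos (fun s _ => hy s) univ_nonempty
  rw [sum_mul_apply_add_sum] at h
  exact (pos_iff_pos_of_mul_pos h).1 (by positivity)

theorem mul_proj_add_sum_proj_single [DecidableEq ι] (c : ℝ) (s i : ι) :
    (c • ContinuousLinearMap.proj s + ∑ j, ContinuousLinearMap.proj j : (ι → ℝ) →L[ℝ] ℝ)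
      (Pi.single i 1) = 1 + c * if i = s then 1 else 0 := by
  simp [Pi.single_apply, eq_comm, add_comm]

theorem inv_sum_le_sum_one_add_mul_ite_div [Nonempty ι] [DecidableEq ι] {c : ℝ}
    (hc : 0 ≤ c) {y : ι → ℝ} (hy : ∀ s, 0 < c * y s + ∑ j, y j) (i : ι) :
    (∑ j, y j)⁻¹ ≤ ∑ s, (1 + c * if i = s then 1 else 0) / (c * y s + ∑ j, y j) := by
  have hweights : ∑ s, (1 + c * if i = s then 1 else 0) = c + Fintype.card ι := by
    simp [sum_add_distrib, add_comm]
  calc (∑ j, y j)⁻¹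
      = (∑ s, (1 + c * if i = s then 1 else 0)) / ∑ s, (c * y s + ∑ j, y j) := by
        rw [hweights, sum_mul_apply_add_sum, div_mul_cancel_left₀ (by positivity)]
    _ ≤ _ := sum_div_sum_le_sum_div _ (fun s _ => by split_ifs <;> linarith) fun s _ => hy s

end LinearForms

/-- For `n ≥ 3`, `μ s x = (n-2)*x s + ∑ j, x j`,
`Γ = {x : ∀ s, μ s x > 0}` and `F x = (∏ s, μ s x)^(1/n)`: on `Γ` one has
`∑ j, x j > 0`, `F` is differentiable with partial derivatives
`∂F/∂x_i = (F x / n) * ∑ s, (1 + (n-2)δ_{is}) / μ s x`, and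
`∂F/∂x_i ≥ (1/n) * F x / (∑ j, x j)`; i.e. `F` satisfies (C₅) with `ε = 1/n`. -/
theorem stmt_3 (n : ℕ) (hn : 3 ≤ n) (x : Fin n → ℝ)
    (hx : ∀ s, 0 < ((n : ℝ) - 2) * x s + ∑ j, x j) :
    let μ : Fin n → (Fin n → ℝ) → ℝ := fun s y => ((n : ℝ) - 2) * y s + ∑ j, y j
    let F : (Fin n → ℝ) → ℝ := fun y => (∏ s, μ s y) ^ (1 / (n : ℝ))
    0 < ∑ j, x j ∧
    DifferentiableAt ℝ F x ∧
    ∀ i : Fin n,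
      fderiv ℝ F x (Pi.single i 1)
          = F x / (n : ℝ) * ∑ s, (1 + ((n : ℝ) - 2) * (if i = s then 1 else 0)) / μ s x ∧
      (1 / (n : ℝ)) * (F x / ∑ j, x j) ≤ fderiv ℝ F x (Pi.single i 1) := by
  intro μ F
  have : Nonempty (Fin n) := ⟨⟨0, by omega⟩⟩
  have hc : (0 : ℝ) ≤ n - 2 := by
    rw [sub_nonneg]
    exact_mod_cast (by omega : 2 ≤ n)
  have hF := HasFDerivAt.prod_rpow_const (1 / (n : ℝ))
    (fun s => hasFDerivAt_mul_apply_add_sum _ s x) hx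
  have hpartial (i : Fin n) : fderiv ℝ F x (Pi.single i 1)
      = F x / (n : ℝ) * ∑ s, (1 + ((n : ℝ) - 2) * (if i = s then 1 else 0)) / μ s x := by
    rw [hF.fderiv]
    simp only [_root_.smul_apply, _root_.sum_apply, mul_proj_add_sum_proj_single,
      smul_eq_mul, mul_sum]
    refine sum_congr rfl fun s _ => ?_
    simp only [F, μ]
    ring
  refine ⟨sum_pos_of_forall_mul_apply_add_sum_pos hc hx, hF.differentiableAt,
    fun i => ⟨hpartial i, ?_⟩⟩
  have hF_nonneg : 0 ≤ F x := Real.rpow_nonneg (prod_nonneg fun s _ => (hx s).le) _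
  rw [hpartial, show 1 / (n : ℝ) * (F x / ∑ j, x j) = F x / n * (∑ j, x j)⁻¹ by ring]
  exact mul_le_mul_of_nonneg_left (inv_sum_le_sum_one_add_mul_ite_div hc hx i)
    (div_nonneg hF_nonneg n.cast_nonneg)
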